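/- For every natural number k ≥ 1: ∑_{p ≤ √x} (1/p)·((log p)/(log x))^k = 1/(k·2^k) + (1/2^{k−1})·O(1/log x), i.e., there exists a constant M (depending on k) such that for all x ≥ 4, |∑_{p prime, p ≤ √x} (log p)^k / (p (log x)^k) − 1/(k 2^k)| ≤ M/(2^{k−1} log x). -/

import Mathlib

/-!
Legendre's formula `log N! = ∑_{p ≤ N} v_p(N!) log p` with `N/p - 1 ≤ v_p(N!) ≤ N/(p-1)`,
together with `N log N - N ≤ log N! ≤ N log N`, Chebyshev's bound `θ(N) ≤ N log 4` and the
convergence of `∑ log n / (n(n-1))`, gives Mertens' estimate `∑_{p ≤ t} log p / p = log t + O(1)`.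
Partial summation against `log^(k-1)` turns this into
`∑_{p ≤ b} log^k p / p = log^k b / k + O(log^(k-1) b)`; at `b = √x` we have `log b = log x / 2`.
-/

open Finset Real

/-- The finset of primes `p ≤ b`. -/
noncomputable def primesUpTo (b : ℝ) : Finset ℕ := (Finset.Iic ⌊b⌋₊).filter Nat.Prime

open scoped Nat
open MeasureTheory

theorem mem_primesUpTo {b : ℝ} {p : ℕ} : p ∈ primesUpTo b ↔ p ≤ ⌊b⌋₊ ∧ p.Prime := by
  simp [primesUpTo]

theorem primesUpTo_floor (b : ℝ) : primesUpTo ⌊b⌋₊ = primesUpTo b := by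
  simp [primesUpTo]

theorem sum_Icc_ite_prime {M : Type*} [AddCommMonoid M] (f : ℕ → M) (b : ℝ) :
    ∑ n ∈ Icc 0 ⌊b⌋₊, (if n.Prime then f n else 0) = ∑ p ∈ primesUpTo b, f p := by
  rw [primesUpTo, sum_filter]
  rfl

theorem theta_eq_sum_primesUpTo (b : ℝ) : Chebyshev.theta b = ∑ p ∈ primesUpTo b, log p := by
  rw [Chebyshev.theta_eq_sum_primesLE]
  congr 1
  ext p
  simp [mem_primesUpTo, Nat.mem_primesLE]

theorem log_factorial_eq_sum_primesUpTo (N : ℕ) :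
    log (N ! : ℕ) = ∑ p ∈ primesUpTo N, (N !).factorization p * log p := by
  rw [log_nat_eq_sum_factorization]
  refine Finsupp.sum_of_support_subset _ (fun p hp => ?_) _ (by simp)
  rw [Nat.support_factorization, Nat.mem_primeFactors] at hp
  rw [mem_primesUpTo, Nat.floor_natCast]
  exact ⟨(hp.1.dvd_factorial).mp hp.2.1, hp.1⟩

theorem div_sub_one_le_factorization_factorial {p : ℕ} (hp : p.Prime) (N : ℕ) :
    (N : ℝ) / p - 1 ≤ (N !).factorization p := by
  have hfirst : N / p ≤ (N !).factorization p := by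
    rw [Nat.factorization_factorial hp (Nat.lt_add_of_pos_right two_pos)]
    simpa using single_le_sum (f := fun i => N / p ^ i) (fun _ _ => Nat.zero_le _)
      (s := Ico 1 (Nat.log p N + 2)) (mem_Ico.mpr ⟨le_rfl, by omega⟩)
  calc (N : ℝ) / p - 1 ≤ (N / p : ℕ) := by
        rw [sub_le_iff_le_add, div_le_iff₀ (by exact_mod_cast hp.pos)]
        exact_mod_cast (Nat.lt_div_mul_add hp.pos).le.trans_eq (by ring)
    _ ≤ _ := by exact_mod_cast hfirst

theorem factorization_factorial_le_div_sub_one {p : ℕ} (hp : p.Prime) (N : ℕ) :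
    ((N !).factorization p : ℝ) ≤ N / (p - 1) := by
  have hp1 : ((p - 1 : ℕ) : ℝ) = p - 1 := by rw [Nat.cast_sub hp.one_le, Nat.cast_one]
  rw [← hp1]
  exact (Nat.cast_le.mpr (Nat.factorization_factorial_le_div_pred hp N)).trans Nat.cast_div_le

theorem log_div_mul_sub_one_le (n : ℕ) :
    log n / (n * (n - 1)) ≤ 4 * ((n : ℝ) ^ (3 / 2 : ℝ))⁻¹ := by
  rcases lt_or_ge n 2 with hn | hn
  · interval_cases n <;> simp
  have hn' : (2 : ℝ) ≤ n := by exact_mod_cast hn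
  set s := (n : ℝ) ^ (1 / 2 : ℝ)
  have hs : 0 < s := by positivity
  have hss : s * s = n := by rw [← rpow_add (by positivity)]; norm_num
  have hpow : (n : ℝ) ^ (3 / 2 : ℝ) = s * n := by
    rw [show (3 / 2 : ℝ) = 1 / 2 + 1 by norm_num, rpow_add_one (by positivity)]
  have hlog : log n ≤ 2 * s := by
    simpa [s, div_eq_mul_inv, mul_comm] using log_le_rpow_div (Nat.cast_nonneg n) one_half_pos
  rw [hpow, div_le_iff₀ (by nlinarith)]
  calc log n ≤ 2 * s := hlog
    _ ≤ 4 * (n - 1) / s := by rw [le_div_iff₀ hs]; nlinarith [hss]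
    _ = 4 * (s * n)⁻¹ * (n * (n - 1)) := by field_simp

theorem log_div_mul_sub_one_nonneg (n : ℕ) : 0 ≤ log n / (n * (n - 1)) := by
  rcases lt_or_ge n 2 with hn | hn
  · interval_cases n <;> simp
  have hn' : (2 : ℝ) ≤ n := by exact_mod_cast hn
  exact div_nonneg (log_natCast_nonneg n) (by nlinarith)

theorem summable_log_div_mul_sub_one : Summable fun n : ℕ => log n / (n * (n - 1)) :=
  .of_nonneg_of_le log_div_mul_sub_one_nonneg log_div_mul_sub_one_le
    ((summable_nat_rpow_inv.mpr (by norm_num)).mul_left 4)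

theorem sum_primesUpTo_log_div_le_log_add {N : ℕ} (hN : N ≠ 0) :
    ∑ p ∈ primesUpTo N, log p / p ≤ log N + log 4 := by
  have hN0 : (0 : ℝ) < N := by positivity
  have hlegendre : N * ∑ p ∈ primesUpTo N, log p / p - Chebyshev.theta N ≤ log (N ! : ℕ) := by
    rw [theta_eq_sum_primesUpTo, mul_sum, ← sum_sub_distrib, log_factorial_eq_sum_primesUpTo]
    refine sum_le_sum fun p hp => ?_
    have hp := (mem_primesUpTo.mp hp).2
    calc (N : ℝ) * (log p / p) - log p = ((N : ℝ) / p - 1) * log p := by ring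
      _ ≤ _ := mul_le_mul_of_nonneg_right (div_sub_one_le_factorization_factorial hp N)
          (log_natCast_nonneg p)
  have hfact : log (N ! : ℕ) ≤ N * log N := by
    rw [← log_pow, ← Nat.cast_pow]
    exact log_le_log (by positivity) (by exact_mod_cast N.factorial_le_pow)
  have htheta := Chebyshev.theta_le_log4_mul_x hN0.le
  have : N * ∑ p ∈ primesUpTo N, log p / p ≤ N * (log N + log 4) := by linarith
  exact le_of_mul_le_mul_left this hN0

theorem log_sub_le_sum_primesUpTo_log_div {N : ℕ} (hN : N ≠ 0) :
    log N - 1 - ∑' n : ℕ, log n / (n * (n - 1)) ≤ ∑ p ∈ primesUpTo N, log p / p := by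
  have hN0 : (0 : ℝ) < N := by positivity
  set K := ∑' n : ℕ, log n / (n * (n - 1))
  have hlegendre : log (N ! : ℕ) ≤
      N * ∑ p ∈ primesUpTo N, (log p / p + log p / (p * (p - 1))) := by
    rw [log_factorial_eq_sum_primesUpTo, mul_sum]
    refine sum_le_sum fun p hp => ?_
    have hp := (mem_primesUpTo.mp hp).2
    have hp0 : (p : ℝ) ≠ 0 := by exact_mod_cast hp.ne_zero
    have hp1 : (p : ℝ) - 1 ≠ 0 := by linarith [show (2 : ℝ) ≤ p by exact_mod_cast hp.two_le]
    calc _ ≤ (N : ℝ) / (p - 1) * log p := mul_le_mul_of_nonneg_right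
          (factorization_factorial_le_div_sub_one hp N) (log_natCast_nonneg p)
      _ = _ := by field_simp; ring
  have htail : ∑ p ∈ primesUpTo N, log p / (p * (p - 1)) ≤ K :=
    summable_log_div_mul_sub_one.sum_le_tsum _ fun n _ => log_div_mul_sub_one_nonneg n
  have hstirling : N * log N - N ≤ log (N ! : ℕ) := by
    have h2π : 0 ≤ log (2 * π) := log_nonneg (by linarith [pi_gt_three])
    linarith [Stirling.le_log_factorial_stirling hN, log_natCast_nonneg N]
  rw [sum_add_distrib] at hlegendre
  have : N * (log N - 1 - K) ≤ N * ∑ p ∈ primesUpTo N, log p / p := by nlinarith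
  exact le_of_mul_le_mul_left this hN0

theorem exists_abs_sum_primesUpTo_log_div_sub_log_le :
    ∃ C, ∀ t : ℝ, 1 ≤ t → |∑ p ∈ primesUpTo t, log p / p - log t| ≤ C := by
  set K := ∑' n : ℕ, log n / (n * (n - 1))
  have hK : 0 ≤ K := tsum_nonneg log_div_mul_sub_one_nonneg
  refine ⟨1 + K + log 4, fun t ht => ?_⟩
  set N := ⌊t⌋₊
  have hN : N ≠ 0 := (Nat.floor_pos.mpr ht).ne'
  have hN0 : (0 : ℝ) < N := by positivity
  have hlogN : log N ≤ log t := log_le_log hN0 (Nat.floor_le (by linarith))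
  have hlogt : log t ≤ log N + log 2 := by
    rw [← log_mul hN0.ne' two_ne_zero]
    refine log_le_log (by linarith) ?_
    have hN1 : (1 : ℝ) ≤ N := by exact_mod_cast Nat.one_le_iff_ne_zero.mpr hN
    linarith [Nat.lt_floor_add_one t]
  have hlog24 : log 2 ≤ log 4 := log_le_log two_pos (by norm_num)
  rw [← primesUpTo_floor, abs_le]
  constructor
  · linarith [log_sub_le_sum_primesUpTo_log_div hN]
  · linarith [sum_primesUpTo_log_div_le_log_add hN, log_nonneg (show (1 : ℝ) ≤ 4 by norm_num)]

theorem hasDerivAt_log_pow (m : ℕ) {t : ℝ} (ht : t ≠ 0) :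
    HasDerivAt (fun u => log u ^ m) (m * log t ^ (m - 1) * t⁻¹) t :=
  (hasDerivAt_log ht).pow m

theorem continuousOn_deriv_log_pow (m : ℕ) :
    ContinuousOn (fun t => m * log t ^ (m - 1) * t⁻¹) (Set.Ici 1) := by
  have h0 : ∀ t ∈ Set.Ici (1 : ℝ), t ≠ 0 := fun t ht => (zero_lt_one.trans_le ht).ne'
  exact (continuousOn_const.mul ((continuousOn_log.mono h0).pow _)).mul
    (continuousOn_inv₀.mono h0)

theorem integral_Ioc_one_deriv_log_pow (m : ℕ) {b : ℝ} (hb : 1 ≤ b) :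
    ∫ t in Set.Ioc 1 b, m * log t ^ (m - 1) * t⁻¹ = log b ^ m - log 1 ^ m := by
  rw [← intervalIntegral.integral_of_le hb]
  refine intervalIntegral.integral_eq_sub_of_hasDerivAt (fun t ht => hasDerivAt_log_pow m ?_) ?_
  · rw [Set.uIcc_of_le hb] at ht
    exact (zero_lt_one.trans_le ht.1).ne'
  · exact ((continuousOn_deriv_log_pow m).mono
      (Set.uIcc_of_le hb ▸ Set.Icc_subset_Ici_self)).intervalIntegrable

theorem integral_Ioc_one_deriv_log_pow_mul_log (m : ℕ) {b : ℝ} (hb : 1 ≤ b) :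
    ∫ t in Set.Ioc 1 b, m * log t ^ (m - 1) * t⁻¹ * log t = m / (m + 1) * log b ^ (m + 1) := by
  have hpow (t : ℝ) : m * log t ^ (m - 1) * t⁻¹ * log t =
      m / (m + 1) * ((m + 1 : ℕ) * log t ^ (m + 1 - 1) * t⁻¹) := by
    rcases m with _ | j
    · simp
    · simp only [Nat.add_sub_cancel, pow_succ]
      push_cast
      field_simp
  simp_rw [hpow]
  rw [integral_const_mul, integral_Ioc_one_deriv_log_pow (m + 1) hb, log_one,
    zero_pow m.succ_ne_zero, sub_zero]

theorem abs_integral_deriv_log_pow_mul_le (m : ℕ) {b C : ℝ} (hb : 1 ≤ b) (hC : 0 ≤ C)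
    {E : ℝ → ℝ} (hE : ∀ t ∈ Set.Ioc 1 b, |E t| ≤ C) :
    |∫ t in Set.Ioc 1 b, m * log t ^ (m - 1) * t⁻¹ * E t| ≤ C * log b ^ m := by
  have hbound (t : ℝ) (ht : t ∈ Set.Ioc 1 b) :
      ‖m * log t ^ (m - 1) * t⁻¹ * E t‖ ≤ C * (m * log t ^ (m - 1) * t⁻¹) := by
    have hlog := log_nonneg ht.1.le
    have ht0 := zero_le_one.trans ht.1.le
    rw [norm_mul, Real.norm_of_nonneg (by positivity), mul_comm]
    exact mul_le_mul_of_nonneg_right (hE t ht) (by positivity)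
  have hint : IntegrableOn (fun t => m * log t ^ (m - 1) * t⁻¹) (Set.Ioc 1 b) :=
    ((continuousOn_deriv_log_pow m).mono Set.Icc_subset_Ici_self).integrableOn_Icc.mono_set
      Set.Ioc_subset_Icc_self
  calc _ ≤ ∫ t in Set.Ioc 1 b, C * (m * log t ^ (m - 1) * t⁻¹) :=
        norm_integral_le_of_norm_le (hint.const_mul C)
          ((ae_restrict_iff' measurableSet_Ioc).mpr (.of_forall hbound))
    _ = C * (log b ^ m - log 1 ^ m) := by
        rw [integral_const_mul, integral_Ioc_one_deriv_log_pow m hb]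
    _ ≤ C * log b ^ m := by
        rw [log_one]
        exact mul_le_mul_of_nonneg_left (sub_le_self _ (by positivity)) hC

theorem sum_log_pow_mul_eq_sub_integral (c : ℕ → ℝ) (hc : c 0 = 0) (m : ℕ) (b : ℝ) :
    ∑ n ∈ Icc 0 ⌊b⌋₊, log n ^ m * c n = log b ^ m * ∑ n ∈ Icc 0 ⌊b⌋₊, c n -
      ∫ t in Set.Ioc 1 b, m * log t ^ (m - 1) * t⁻¹ * ∑ n ∈ Icc 0 ⌊t⌋₊, c n := by
  have hpos (t : ℝ) (ht : t ∈ Set.Icc 1 b) : t ≠ 0 := (zero_lt_one.trans_le ht.1).ne'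
  have hderiv : Set.EqOn (deriv fun t => log t ^ m) (fun t => m * log t ^ (m - 1) * t⁻¹)
      (Set.Icc 1 b) := fun t ht => (hasDerivAt_log_pow m (hpos t ht)).deriv
  have hint : IntegrableOn (fun t => m * log t ^ (m - 1) * t⁻¹) (Set.Icc 1 b) :=
    ((continuousOn_deriv_log_pow m).mono Set.Icc_subset_Ici_self).integrableOn_Icc
  rw [sum_mul_eq_sub_integral_mul₀ c hc b
    (fun t ht => (hasDerivAt_log_pow m (hpos t ht)).differentiableAt)
    (hint.congr_fun hderiv.symm measurableSet_Icc)]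
  congr 1
  exact setIntegral_congr_fun measurableSet_Ioc fun t ht => by
    rw [hderiv (Set.Ioc_subset_Icc_self ht)]

theorem abs_sum_log_pow_mul_sub_le {c : ℕ → ℝ} (hc : c 0 = 0) {C : ℝ}
    (hC : ∀ t : ℝ, 1 ≤ t → |∑ n ∈ Icc 0 ⌊t⌋₊, c n - log t| ≤ C) (m : ℕ) {b : ℝ} (hb : 1 ≤ b) :
    |∑ n ∈ Icc 0 ⌊b⌋₊, log n ^ m * c n - log b ^ (m + 1) / (m + 1)| ≤ 2 * C * log b ^ m := by
  set A : ℝ → ℝ := fun t => ∑ n ∈ Icc 0 ⌊t⌋₊, c n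
  set w : ℝ → ℝ := fun t => m * log t ^ (m - 1) * t⁻¹
  have hw : ContinuousOn w (Set.Icc 1 b) :=
    (continuousOn_deriv_log_pow m).mono Set.Icc_subset_Ici_self
  have hwlog : IntegrableOn (fun t => w t * log t) (Set.Ioc 1 b) :=
    (hw.mul (continuousOn_log.mono fun t ht => (zero_lt_one.trans_le ht.1).ne')).integrableOn_Icc
      |>.mono_set Set.Ioc_subset_Icc_self
  have hwA : IntegrableOn (fun t => w t * A t) (Set.Ioc 1 b) :=
    (integrableOn_mul_sum_Icc c zero_le_one hw.integrableOn_Icc).mono_set Set.Ioc_subset_Icc_self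
  have hwE : IntegrableOn (fun t => w t * (A t - log t)) (Set.Ioc 1 b) := by
    simp only [mul_sub]
    exact hwA.sub hwlog
  have hsplit : ∫ t in Set.Ioc 1 b, w t * A t =
      m / (m + 1) * log b ^ (m + 1) + ∫ t in Set.Ioc 1 b, w t * (A t - log t) := by
    rw [← integral_Ioc_one_deriv_log_pow_mul_log m hb, ← integral_add hwlog hwE]
    congr 1 with t
    ring
  have hC0 : 0 ≤ C := (abs_nonneg _).trans (hC 1 le_rfl)
  have hEb : |log b ^ m * (A b - log b)| ≤ C * log b ^ m := by
    rw [abs_mul, abs_of_nonneg (pow_nonneg (log_nonneg hb) m), mul_comm]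
    exact mul_le_mul_of_nonneg_right (hC b hb) (pow_nonneg (log_nonneg hb) m)
  calc _ = |log b ^ m * (A b - log b) - ∫ t in Set.Ioc 1 b, w t * (A t - log t)| := by
        rw [sum_log_pow_mul_eq_sub_integral c hc m b, hsplit]
        congr 1
        field_simp
        ring
    _ ≤ C * log b ^ m + C * log b ^ m := (abs_sub _ _).trans (add_le_add hEb
        (abs_integral_deriv_log_pow_mul_le m hb hC0 fun t ht => hC t ht.1.le))
    _ = 2 * C * log b ^ m := by ring

theorem exists_abs_sum_primesUpTo_log_pow_div_sub_le (m : ℕ) :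
    ∃ C, ∀ b : ℝ, 1 ≤ b →
      |∑ p ∈ primesUpTo b, log p ^ (m + 1) / p - log b ^ (m + 1) / (m + 1)| ≤ C * log b ^ m := by
  obtain ⟨C, hC⟩ := exists_abs_sum_primesUpTo_log_div_sub_log_le
  set c : ℕ → ℝ := fun n => if n.Prime then log n / n else 0
  have hsum (t : ℝ) : ∑ n ∈ Icc 0 ⌊t⌋₊, c n = ∑ p ∈ primesUpTo t, log p / p :=
    sum_Icc_ite_prime _ t
  refine ⟨2 * C, fun b hb => ?_⟩
  have hweighted :
      ∑ n ∈ Icc 0 ⌊b⌋₊, log n ^ m * c n = ∑ p ∈ primesUpTo b, log p ^ (m + 1) / p := by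
    simp_rw [c, mul_ite, mul_zero, sum_Icc_ite_prime, pow_succ, mul_div_assoc]
  rw [← hweighted]
  exact abs_sum_log_pow_mul_sub_le (by simp [c]) (fun t ht => hsum t ▸ hC t ht) m hb

theorem popa_evaluation (k : ℕ) (hk : 1 ≤ k) :
    ∃ M : ℝ, ∀ x : ℝ, 4 ≤ x →
      |(∑ p ∈ primesUpTo (Real.sqrt x), (Real.log p) ^ k / (p * (Real.log x) ^ k))
        - 1 / (k * 2 ^ k)| ≤ M / (2 ^ (k - 1) * Real.log x) := by
  obtain ⟨m, rfl⟩ : ∃ m, k = m + 1 := ⟨k - 1, by omega⟩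
  obtain ⟨C, hC⟩ := exists_abs_sum_primesUpTo_log_pow_div_sub_le m
  refine ⟨C, fun x hx => ?_⟩
  have hL : 0 < log x := log_pos (by linarith)
  have hsqrt := hC √x (one_le_sqrt.mpr (by linarith))
  rw [log_sqrt (by linarith)] at hsqrt
  have hnormalize : ∑ p ∈ primesUpTo √x, log p ^ (m + 1) / (p * log x ^ (m + 1)) -
      1 / ((m + 1 : ℕ) * 2 ^ (m + 1)) = (∑ p ∈ primesUpTo √x, log p ^ (m + 1) / p -
        (log x / 2) ^ (m + 1) / (m + 1)) / log x ^ (m + 1) := by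
    rw [sub_div, sum_div]
    congr 1
    · simp_rw [div_div]
    · push_cast
      rw [div_pow]
      field_simp
  rw [hnormalize, abs_div, abs_of_pos (pow_pos hL _), div_le_iff₀ (by positivity),
    Nat.add_sub_cancel]
  calc _ ≤ C * (log x / 2) ^ m := hsqrt
    _ = C / (2 ^ m * log x) * log x ^ (m + 1) := by rw [div_pow]; field_simp; ring
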